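/- With entwining data (P, C, ψ, e, ψ^C), M = P^{coC}_e, and maps ρ, σ satisfying conditions (i)–(iv), the product (x ⊗ b)(y ⊗ c) = x ρ(b₍₁₎ ⊗ y_α) σ(b₍₂₎^α₍₁₎ ⊗ c_A) ⊗ b₍₂₎^α₍₂₎^A on M ⊗ C is associative if and only if both the cocycle condition ρ(a₍₁₎ ⊗ σ(b₍₁₎ ⊗ c_A)_α) σ(a₍₂₎^α₍₁₎ ⊗ b₍₂₎^A_B) ⊗ a₍₂₎^α₍₂₎^B = σ(a₍₁₎ ⊗ b_A) σ(a₍₂₎^A₍₁₎ ⊗ c_B) ⊗ a₍₂₎^A₍₂₎^B and the twisted module condition ρ(a₍₁₎ ⊗ ρ(b₍₁₎ ⊗ x_α)_β) σ(a₍₂₎^β₍₁₎ ⊗ b₍₂₎^α_A) ⊗ a₍₂₎^β₍₂₎^A = σ(a₍₁₎ ⊗ b_A) ρ(a₍₂₎^A₍₁₎ ⊗ x_α) ⊗ a₍₂₎^A₍₂₎^α hold for all a, b, c ∈ C, x ∈ M. -/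

import Mathlib

open TensorProduct LinearMap

noncomputable section

namespace Entwine

variable (k : Type) [Field k] (P : Type) [Ring P] [Algebra k P]
  (C : Type) [AddCommGroup C] [Module k C] [Coalgebra k C]

/-- coproduct of `C` -/
abbrev Δ : C →ₗ[k] C ⊗[k] C := Coalgebra.comul
/-- counit of `C` -/
abbrev ε : C →ₗ[k] k := Coalgebra.counit
/-- multiplication of `P` -/
abbrev μ : P ⊗[k] P →ₗ[k] P := LinearMap.mul' k P

variable (ψ : C ⊗[k] P →ₗ[k] P ⊗[k] C)

/-- entwining axiom `ψ∘(id⊗μ) = (μ⊗id)∘ψ₂₃∘ψ₁₂` -/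
def AxMul : Prop :=
  ψ ∘ₗ map LinearMap.id (μ k P) =
    map (μ k P) LinearMap.id
      ∘ₗ (TensorProduct.assoc k P P C).symm.toLinearMap
      ∘ₗ map LinearMap.id ψ
      ∘ₗ (TensorProduct.assoc k P C P).toLinearMap
      ∘ₗ map ψ LinearMap.id
      ∘ₗ (TensorProduct.assoc k C P P).symm.toLinearMap

/-- entwining axiom `ψ(c ⊗ 1) = 1 ⊗ c` -/
def AxOne : Prop := ∀ c : C, ψ (c ⊗ₜ (1 : P)) = (1 : P) ⊗ₜ c

/-- entwining axiom `(id⊗Δ)∘ψ = ψ₁₂∘ψ₂₃∘(Δ⊗id)` -/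
def AxComul : Prop :=
  map LinearMap.id (Δ k C) ∘ₗ ψ =
    (TensorProduct.assoc k P C C).toLinearMap
      ∘ₗ map ψ LinearMap.id
      ∘ₗ (TensorProduct.assoc k C P C).symm.toLinearMap
      ∘ₗ map LinearMap.id ψ
      ∘ₗ (TensorProduct.assoc k C C P).toLinearMap
      ∘ₗ map (Δ k C) LinearMap.id

/-- entwining axiom `(id⊗ε)∘ψ = ε⊗id` -/
def AxCounit : Prop :=
  (TensorProduct.rid k P).toLinearMap ∘ₗ map LinearMap.id (ε k C) ∘ₗ ψ =
    (TensorProduct.lid k P).toLinearMap ∘ₗ map (ε k C) LinearMap.id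

/-- `ψ` is an entwining map for the algebra `P` and the coalgebra `C` -/
def IsEntwining : Prop :=
  AxMul k P C ψ ∧ AxOne k P C ψ ∧ AxComul k P C ψ ∧ AxCounit k P C ψ

variable (e : C)

/-- `e` is a group-like element -/
def IsGrouplike : Prop :=
  Δ k C e = e ⊗ₜ[k] e ∧ ε k C e = 1

variable (ψC : C ⊗[k] C →ₗ[k] C ⊗[k] C)

/-- `(id⊗Δ)∘ψ^C = ψ^C₁₂∘ψ^C₂₃∘(Δ⊗id)` -/
def AxPsiCComul : Prop :=
  map LinearMap.id (Δ k C) ∘ₗ ψC =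
    (TensorProduct.assoc k C C C).toLinearMap
      ∘ₗ map ψC LinearMap.id
      ∘ₗ (TensorProduct.assoc k C C C).symm.toLinearMap
      ∘ₗ map LinearMap.id ψC
      ∘ₗ (TensorProduct.assoc k C C C).toLinearMap
      ∘ₗ map (Δ k C) LinearMap.id

/-- `(id⊗ε)∘ψ^C = ε⊗id` -/
def AxPsiCCounit : Prop :=
  (TensorProduct.rid k C).toLinearMap ∘ₗ map LinearMap.id (ε k C) ∘ₗ ψC =
    (TensorProduct.lid k C).toLinearMap ∘ₗ map (ε k C) LinearMap.id

/-- `ψ^C(e ⊗ c) = Δc` -/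
def AxPsiCUnit : Prop := ∀ c : C, ψC (e ⊗ₜ[k] c) = Δ k C c

/-- `(P, C, ψ, e, ψ^C)` form entwining data -/
def IsEntwiningData : Prop :=
  IsEntwining k P C ψ ∧ IsGrouplike k C e ∧
    AxPsiCComul k C ψC ∧ AxPsiCCounit k C ψC ∧ AxPsiCUnit k C e ψC

/-- the right coaction `Δ_R u = ψ(e ⊗ u)` on `P` -/
def deltaR : P →ₗ[k] P ⊗[k] C := ψ ∘ₗ TensorProduct.mk k C P e

/-- the fixed point subspace `M = P^{coC}_e`, as a submodule of `P` -/
def Msub : Submodule k P where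
  carrier := {x : P | ψ (e ⊗ₜ x) = x ⊗ₜ e}
  add_mem' := by
    intro a b ha hb
    simp only [Set.mem_setOf_eq] at *
    rw [TensorProduct.tmul_add, map_add, ha, hb, TensorProduct.add_tmul]
  zero_mem' := by
    simp only [Set.mem_setOf_eq, TensorProduct.tmul_zero, map_zero,
      TensorProduct.zero_tmul]
  smul_mem' := by
    intro r x hx
    simp only [Set.mem_setOf_eq] at *
    rw [TensorProduct.tmul_smul, map_smul, hx, TensorProduct.smul_tmul']

/-- the subspace `M ⊗ C` of `P ⊗ C` -/
def MCsub : Submodule k (P ⊗[k] C) :=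
  LinearMap.range (map (Msub k P C ψ e).subtype (LinearMap.id : C →ₗ[k] C))

variable (ρ : C ⊗[k] P →ₗ[k] P) (σ : C ⊗[k] C →ₗ[k] P)

/-- the map `ρ̂ : c ⊗ x ↦ ρ(c₍₁₎ ⊗ x_α) ⊗ c₍₂₎^α` -/
def rhat : C ⊗[k] P →ₗ[k] P ⊗[k] C :=
  map ρ LinearMap.id
    ∘ₗ (TensorProduct.assoc k C P C).symm.toLinearMap
    ∘ₗ map LinearMap.id ψ
    ∘ₗ (TensorProduct.assoc k C C P).toLinearMap
    ∘ₗ map (Δ k C) LinearMap.id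

/-- the map `σ̂ : b ⊗ c ↦ σ(b₍₁₎ ⊗ c_A) ⊗ b₍₂₎^A` -/
def shat : C ⊗[k] C →ₗ[k] P ⊗[k] C :=
  map σ LinearMap.id
    ∘ₗ (TensorProduct.assoc k C C C).symm.toLinearMap
    ∘ₗ map LinearMap.id ψC
    ∘ₗ (TensorProduct.assoc k C C C).toLinearMap
    ∘ₗ map (Δ k C) LinearMap.id

/-- multiplication of the first two factors: `x ⊗ (y ⊗ c) ↦ xy ⊗ c` -/
def mulPC : P ⊗[k] (P ⊗[k] C) →ₗ[k] P ⊗[k] C :=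
  map (μ k P) LinearMap.id ∘ₗ (TensorProduct.assoc k P P C).symm.toLinearMap

/-- the crossed product `(x ⊗ b)(y ⊗ c) = xρ(b₍₁₎⊗y_α)σ(b₍₂₎^α₍₁₎⊗c_A) ⊗ b₍₂₎^α₍₂₎^A` -/
def prodX : (P ⊗[k] C) ⊗[k] (P ⊗[k] C) →ₗ[k] P ⊗[k] C :=
  mulPC k P C
    ∘ₗ map LinearMap.id (mulPC k P C)
    ∘ₗ map LinearMap.id
        (map LinearMap.id (shat k P C ψC σ)
          ∘ₗ (TensorProduct.assoc k P C C).toLinearMap)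
    ∘ₗ map LinearMap.id
        (map (rhat k P C ψ ρ) LinearMap.id
          ∘ₗ (TensorProduct.assoc k C P C).symm.toLinearMap)
    ∘ₗ (TensorProduct.assoc k P C (P ⊗[k] C)).toLinearMap

/-- condition (i): `ρ(e,x) = x` for `x ∈ M` and `ρ(c,1) = ε(c)1` -/
def CondI : Prop :=
  (∀ x : P, x ∈ Msub k P C ψ e → ρ (e ⊗ₜ x) = x) ∧
    ∀ c : C, ρ (c ⊗ₜ (1 : P)) = ε k C c • (1 : P)

/-- condition (ii): `ρ̂` maps `C ⊗ M` into `M ⊗ C` -/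
def CondII : Prop :=
  ∀ (c : C) (x : P), x ∈ Msub k P C ψ e →
    rhat k P C ψ ρ (c ⊗ₜ x) ∈ MCsub k P C ψ e

/-- the right hand side of condition (iii): `(μ⊗id)∘(id⊗ρ̂)∘(ρ̂⊗id)` -/
def BmapIII : C ⊗[k] (P ⊗[k] P) →ₗ[k] P ⊗[k] C :=
  mulPC k P C
    ∘ₗ map LinearMap.id (rhat k P C ψ ρ)
    ∘ₗ (TensorProduct.assoc k P C P).toLinearMap
    ∘ₗ map (rhat k P C ψ ρ) LinearMap.id
    ∘ₗ (TensorProduct.assoc k C P P).symm.toLinearMap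

/-- condition (iii): twisted multiplicativity of `ρ` -/
def CondIII : Prop :=
  ∀ (c : C) (x y : P), x ∈ Msub k P C ψ e → y ∈ Msub k P C ψ e →
    rhat k P C ψ ρ (c ⊗ₜ (x * y)) = BmapIII k P C ψ ρ (c ⊗ₜ (x ⊗ₜ y))

/-- `σ` takes values in `M` -/
def SigmaIntoM : Prop := ∀ b c : C, σ (b ⊗ₜ c) ∈ Msub k P C ψ e

/-- condition (iv): `σ(e⊗c) = ε(c)1` and `σ(c₍₁₎⊗e_A) ⊗ c₍₂₎^A = 1 ⊗ c` -/
def CondIV : Prop :=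
  (∀ c : C, σ (e ⊗ₜ c) = ε k C c • (1 : P)) ∧
    ∀ c : C, shat k P C ψC σ (c ⊗ₜ e) = (1 : P) ⊗ₜ c

/-- `(ρ, σ)` are crossed product data: conditions (i)–(iv). -/
def IsCrossedData : Prop :=
  CondI k P C ψ e ρ ∧ CondII k P C ψ e ρ ∧ CondIII k P C ψ e ρ ∧
    SigmaIntoM k P C ψ e σ ∧ CondIV k P C e ψC σ

/-- left hand side of the cocycle condition (2.6) -/
def CocLHS : C ⊗[k] (C ⊗[k] C) →ₗ[k] P ⊗[k] C :=
  mulPC k P C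
    ∘ₗ map LinearMap.id (shat k P C ψC σ)
    ∘ₗ (TensorProduct.assoc k P C C).toLinearMap
    ∘ₗ map (rhat k P C ψ ρ) LinearMap.id
    ∘ₗ (TensorProduct.assoc k C P C).symm.toLinearMap
    ∘ₗ map LinearMap.id (shat k P C ψC σ)

/-- right hand side of the cocycle condition (2.6) -/
def CocRHS : C ⊗[k] (C ⊗[k] C) →ₗ[k] P ⊗[k] C :=
  mulPC k P C
    ∘ₗ map LinearMap.id (shat k P C ψC σ)
    ∘ₗ (TensorProduct.assoc k P C C).toLinearMap
    ∘ₗ map (shat k P C ψC σ) LinearMap.id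
    ∘ₗ (TensorProduct.assoc k C C C).symm.toLinearMap

/-- the cocycle condition (2.6) -/
def Cocycle : Prop := CocLHS k P C ψ ψC ρ σ = CocRHS k P C ψC σ

/-- left hand side of the twisted module condition (2.7) -/
def TwLHS : C ⊗[k] (C ⊗[k] P) →ₗ[k] P ⊗[k] C :=
  mulPC k P C
    ∘ₗ map LinearMap.id (shat k P C ψC σ)
    ∘ₗ (TensorProduct.assoc k P C C).toLinearMap
    ∘ₗ map (rhat k P C ψ ρ) LinearMap.id
    ∘ₗ (TensorProduct.assoc k C P C).symm.toLinearMap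
    ∘ₗ map LinearMap.id (rhat k P C ψ ρ)

/-- right hand side of the twisted module condition (2.7) -/
def TwRHS : C ⊗[k] (C ⊗[k] P) →ₗ[k] P ⊗[k] C :=
  mulPC k P C
    ∘ₗ map LinearMap.id (rhat k P C ψ ρ)
    ∘ₗ (TensorProduct.assoc k P C P).toLinearMap
    ∘ₗ map (shat k P C ψC σ) LinearMap.id
    ∘ₗ (TensorProduct.assoc k C C P).symm.toLinearMap

/-- the twisted module condition (2.7), for `x ∈ M` -/
def Twisted : Prop :=
  ∀ (a b : C) (x : P), x ∈ Msub k P C ψ e →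
    TwLHS k P C ψ ψC ρ σ (a ⊗ₜ (b ⊗ₜ x)) = TwRHS k P C ψ ψC ρ σ (a ⊗ₜ (b ⊗ₜ x))

end Entwine

/-! For `u = p ⊗ d` in `P ⊗ C` write `u ◁ x = p ρ̂(d ⊗ x)` and `u ◀ c = p σ̂(d ⊗ c)`. The crossed
product is then `u ⋆ (z ⊗ c) = (u ◁ z) ◀ c`, so it is associative on `M ⊗ C` as soon as `⋆`
commutes with both right actions: `u ⋆ (v ◁ z) = (u ⋆ v) ◁ z` and `u ⋆ (v ◀ c) = (u ⋆ v) ◀ c`.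
For `v = y ⊗ b` condition (iii) turns `u ⋆ (y • t)` into `(u ◁ y) ⋆ t`, which leaves
`w ⋆ ρ̂(b ⊗ z) = (w ◀ b) ◁ z` and `w ⋆ σ̂(b ⊗ c) = (w ◀ b) ◀ c`; as `⋆` is `P`-linear on the left
it suffices to take `w = 1 ⊗ a`, and these are the twisted module and cocycle conditions.
Conversely, by the normalisations (i) and (iv) the two conditions are the associativity of the
triples `(1 ⊗ a, 1 ⊗ b, x ⊗ e)` and `(1 ⊗ a, 1 ⊗ b, 1 ⊗ c)`. -/

namespace Entwine

section CrossedProduct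

variable {k : Type} [Field k] {P : Type} [Ring P] [Algebra k P]
  {C : Type} [AddCommGroup C] [Module k C] {ψ : C ⊗[k] P →ₗ[k] P ⊗[k] C} {e : C}

lemma mulPC_tmul (x : P) (t : P ⊗[k] C) : mulPC k P C (x ⊗ₜ t) = x • t := by
  induction t with
  | zero => simp
  | tmul p c => simp [mulPC, mul'_apply, smul_tmul']
  | add s t hs ht => simp only [tmul_add, map_add, hs, ht, smul_add]

lemma tmul_eq_smul_one_tmul (r : P) (a : C) : (r ⊗ₜ a : P ⊗[k] C) = r • ((1 : P) ⊗ₜ a) := by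
  rw [smul_tmul', smul_eq_mul, mul_one]

lemma tmul_mem_MCsub {x : P} (hx : x ∈ Msub k P C ψ e) (c : C) :
    x ⊗ₜ[k] c ∈ MCsub k P C ψ e :=
  ⟨(⟨x, hx⟩ : Msub k P C ψ e) ⊗ₜ c, rfl⟩

@[elab_as_elim]
lemma MCsub_induction {motive : P ⊗[k] C → Prop} (zero : motive 0)
    (add : ∀ s t, motive s → motive t → motive (s + t))
    (tmul : ∀ x ∈ Msub k P C ψ e, ∀ c : C, motive (x ⊗ₜ c))
    {t : P ⊗[k] C} (ht : t ∈ MCsub k P C ψ e) : motive t := by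
  obtain ⟨t, rfl⟩ := ht
  induction t with
  | zero => simpa using zero
  | tmul x c => simpa using tmul x.1 x.2 c
  | add s t hs ht => rw [map_add]; exact add _ _ hs ht

lemma map_mem_MCsub {V : Type} [AddCommGroup V] [Module k V] {f : V →ₗ[k] P}
    (hf : ∀ v, f v ∈ Msub k P C ψ e) (u : V ⊗[k] C) :
    map f LinearMap.id u ∈ MCsub k P C ψ e :=
  ⟨map (f.codRestrict _ hf) LinearMap.id u, by
    rw [← LinearMap.comp_apply, ← map_comp]; rfl⟩

lemma mul_mem_Msub (hMul : AxMul k P C ψ) {x y : P}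
    (hx : x ∈ Msub k P C ψ e) (hy : y ∈ Msub k P C ψ e) : x * y ∈ Msub k P C ψ e := by
  have h := LinearMap.congr_fun hMul (e ⊗ₜ (x ⊗ₜ y))
  change ψ (e ⊗ₜ x) = x ⊗ₜ e at hx
  change ψ (e ⊗ₜ y) = y ⊗ₜ e at hy
  show ψ (e ⊗ₜ (x * y)) = (x * y) ⊗ₜ e
  simpa [mul'_apply, hx, hy] using h

lemma smul_mem_MCsub (hMul : AxMul k P C ψ) {y : P} (hy : y ∈ Msub k P C ψ e)
    {t : P ⊗[k] C} (ht : t ∈ MCsub k P C ψ e) : y • t ∈ MCsub k P C ψ e := by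
  refine MCsub_induction ?_ (fun s t hs ht => ?_) (fun x hx c => ?_) ht
  · simp
  · rw [smul_add]; exact add_mem hs ht
  · rw [smul_tmul', smul_eq_mul]
    exact tmul_mem_MCsub (mul_mem_Msub hMul hy hx) c

variable [Coalgebra k C] {ψC : C ⊗[k] C →ₗ[k] C ⊗[k] C}
  {ρ : C ⊗[k] P →ₗ[k] P} {σ : C ⊗[k] C →ₗ[k] P}

variable (ψ ρ) in
def actRho : (P ⊗[k] C) ⊗[k] P →ₗ[k] P ⊗[k] C :=
  mulPC k P C ∘ₗ map LinearMap.id (rhat k P C ψ ρ) ∘ₗ (TensorProduct.assoc k P C P).toLinearMap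

variable (ψC σ) in
def actSigma : (P ⊗[k] C) ⊗[k] C →ₗ[k] P ⊗[k] C :=
  mulPC k P C ∘ₗ map LinearMap.id (shat k P C ψC σ) ∘ₗ (TensorProduct.assoc k P C C).toLinearMap

local notation:70 u:70 " ⋆ " v:71 => prodX _ _ _ ψ ψC ρ σ (u ⊗ₜ v)
local notation:70 u:70 " ◁ " x:71 => actRho ψ ρ (u ⊗ₜ x)
local notation:70 u:70 " ◀ " c:71 => actSigma ψC σ (u ⊗ₜ c)

lemma actRho_tmul (p : P) (d : C) (x : P) :
    (p ⊗ₜ d : P ⊗[k] C) ◁ x = p • rhat k P C ψ ρ (d ⊗ₜ x) := by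
  simp [actRho, mulPC_tmul]

lemma actSigma_tmul (p : P) (d c : C) :
    (p ⊗ₜ d : P ⊗[k] C) ◀ c = p • shat k P C ψC σ (d ⊗ₜ c) := by
  simp [actSigma, mulPC_tmul]

lemma smul_actRho (y : P) (u : P ⊗[k] C) (x : P) : (y • u) ◁ x = y • (u ◁ x) := by
  induction u with
  | zero => simp
  | tmul p d => simp [smul_tmul', actRho_tmul, mul_smul]
  | add s t hs ht => simp only [smul_add, add_tmul, map_add, hs, ht]

lemma smul_actSigma (y : P) (u : P ⊗[k] C) (c : C) : (y • u) ◀ c = y • (u ◀ c) := by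
  induction u with
  | zero => simp
  | tmul p d => simp [smul_tmul', actSigma_tmul, mul_smul]
  | add s t hs ht => simp only [smul_add, add_tmul, map_add, hs, ht]

lemma one_tmul_actRho (a : C) (x : P) :
    ((1 : P) ⊗ₜ a : P ⊗[k] C) ◁ x = rhat k P C ψ ρ (a ⊗ₜ x) := by
  rw [actRho_tmul, one_smul]

lemma one_tmul_actSigma (a c : C) :
    ((1 : P) ⊗ₜ a : P ⊗[k] C) ◀ c = shat k P C ψC σ (a ⊗ₜ c) := by
  rw [actSigma_tmul, one_smul]

lemma prodX_tmul_tmul (u : P ⊗[k] C) (z : P) (c : C) : u ⋆ (z ⊗ₜ c) = (u ◁ z) ◀ c := by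
  induction u with
  | zero => simp
  | tmul p d =>
    rw [actRho_tmul, smul_actSigma]
    simp [prodX, actSigma, mulPC_tmul]
  | add s t hs ht => simp only [add_tmul, map_add, hs, ht]

lemma smul_prodX (y : P) (u v : P ⊗[k] C) : (y • u) ⋆ v = y • (u ⋆ v) := by
  induction v with
  | zero => simp
  | tmul z c => simp only [prodX_tmul_tmul, smul_actRho, smul_actSigma]
  | add s t hs ht => simp only [tmul_add, map_add, hs, ht, smul_add]

lemma CocLHS_tmul (a b c : C) :
    CocLHS k P C ψ ψC ρ σ (a ⊗ₜ (b ⊗ₜ c)) = ((1 : P) ⊗ₜ a) ⋆ shat k P C ψC σ (b ⊗ₜ c) := by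
  simp [CocLHS, prodX, mulPC_tmul]

lemma CocRHS_tmul (a b c : C) :
    CocRHS k P C ψC σ (a ⊗ₜ (b ⊗ₜ c)) = shat k P C ψC σ (a ⊗ₜ b) ◀ c := by
  simp [CocRHS, actSigma]

lemma TwLHS_tmul (a b : C) (x : P) :
    TwLHS k P C ψ ψC ρ σ (a ⊗ₜ (b ⊗ₜ x)) = ((1 : P) ⊗ₜ a) ⋆ rhat k P C ψ ρ (b ⊗ₜ x) := by
  simp [TwLHS, prodX, mulPC_tmul]

lemma TwRHS_tmul (a b : C) (x : P) :
    TwRHS k P C ψ ψC ρ σ (a ⊗ₜ (b ⊗ₜ x)) = shat k P C ψC σ (a ⊗ₜ b) ◁ x := by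
  simp [TwRHS, actRho]

lemma BmapIII_tmul (c : C) (x y : P) :
    BmapIII k P C ψ ρ (c ⊗ₜ (x ⊗ₜ y)) = rhat k P C ψ ρ (c ⊗ₜ x) ◁ y := by
  simp [BmapIII, actRho]

lemma cocycle_iff : Cocycle k P C ψ ψC ρ σ ↔
    ∀ a b c : C, ((1 : P) ⊗ₜ a) ⋆ shat k P C ψC σ (b ⊗ₜ c) = shat k P C ψC σ (a ⊗ₜ b) ◀ c := by
  refine ⟨fun h a b c => ?_, fun h => TensorProduct.ext_threefold' fun a b c => ?_⟩
  · rw [← CocLHS_tmul, h, CocRHS_tmul]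
  · rw [CocLHS_tmul, CocRHS_tmul, h]

lemma rhat_tmul_one (hOne : AxOne k P C ψ)
    (hρ : ∀ c : C, ρ (c ⊗ₜ (1 : P)) = ε k C c • (1 : P)) (c : C) :
    rhat k P C ψ ρ (c ⊗ₜ 1) = (1 : P) ⊗ₜ c := by
  suffices h : ∀ t : C ⊗[k] C,
      map ρ LinearMap.id ((TensorProduct.assoc k C P C).symm
        (map LinearMap.id ψ (TensorProduct.assoc k C C P (t ⊗ₜ 1)))) =
        (1 : P) ⊗ₜ TensorProduct.lid k C ((ε k C).rTensor C t) by
    simpa [rhat, Coalgebra.rTensor_counit_comul] using h (Δ k C c)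
  intro t
  induction t with
  | zero => simp
  | tmul d d' => simp [hOne d', hρ d, smul_tmul]
  | add s t hs ht => simp only [add_tmul, map_add, tmul_add, hs, ht]

lemma actRho_one (hOne : AxOne k P C ψ)
    (hρ : ∀ c : C, ρ (c ⊗ₜ (1 : P)) = ε k C c • (1 : P)) (u : P ⊗[k] C) : u ◁ 1 = u := by
  induction u with
  | zero => simp
  | tmul p d => rw [actRho_tmul, rhat_tmul_one hOne hρ, smul_tmul', smul_eq_mul, mul_one]
  | add s t hs ht => simp only [add_tmul, map_add, hs, ht]

lemma actSigma_e (hσe : ∀ c : C, shat k P C ψC σ (c ⊗ₜ e) = (1 : P) ⊗ₜ c)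
    (u : P ⊗[k] C) : u ◀ e = u := by
  induction u with
  | zero => simp
  | tmul p d => rw [actSigma_tmul, hσe, smul_tmul', smul_eq_mul, mul_one]
  | add s t hs ht => simp only [add_tmul, map_add, hs, ht]

lemma shat_mem_MCsub (hσ : SigmaIntoM k P C ψ e σ) (t : C ⊗[k] C) :
    shat k P C ψC σ t ∈ MCsub k P C ψ e := by
  have hσ' : ∀ t, σ t ∈ Msub k P C ψ e := fun t => by
    induction t with
    | zero => simp
    | tmul b c => exact hσ b c
    | add s t hs ht => rw [map_add]; exact add_mem hs ht
  exact map_mem_MCsub hσ' _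

lemma actRho_mem (hMul : AxMul k P C ψ) (hII : CondII k P C ψ e ρ)
    {v : P ⊗[k] C} (hv : v ∈ MCsub k P C ψ e) {z : P} (hz : z ∈ Msub k P C ψ e) :
    v ◁ z ∈ MCsub k P C ψ e := by
  refine MCsub_induction ?_ (fun s t hs ht => ?_) (fun y hy b => ?_) hv
  · simp
  · rw [add_tmul, map_add]; exact add_mem hs ht
  · rw [actRho_tmul]; exact smul_mem_MCsub hMul hy (hII b z hz)

lemma actRho_mul (hIII : CondIII k P C ψ e ρ) {x y : P}
    (hx : x ∈ Msub k P C ψ e) (hy : y ∈ Msub k P C ψ e) (u : P ⊗[k] C) :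
    u ◁ (x * y) = (u ◁ x) ◁ y := by
  induction u with
  | zero => simp
  | tmul p d => rw [actRho_tmul, hIII d x y hx hy, BmapIII_tmul, actRho_tmul, smul_actRho]
  | add s t hs ht => simp only [add_tmul, map_add, hs, ht]

lemma prodX_smul (hIII : CondIII k P C ψ e ρ) {y : P} (hy : y ∈ Msub k P C ψ e)
    {t : P ⊗[k] C} (ht : t ∈ MCsub k P C ψ e) (u : P ⊗[k] C) :
    u ⋆ (y • t) = (u ◁ y) ⋆ t := by
  refine MCsub_induction ?_ (fun s t hs ht => ?_) (fun x hx c => ?_) ht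
  · simp
  · simp only [smul_add, tmul_add, map_add, hs, ht]
  · rw [smul_tmul', smul_eq_mul, prodX_tmul_tmul, prodX_tmul_tmul, actRho_mul hIII hy hx]

lemma prodX_shat (hC : Cocycle k P C ψ ψC ρ σ) (w : P ⊗[k] C) (b c : C) :
    w ⋆ shat k P C ψC σ (b ⊗ₜ c) = (w ◀ b) ◀ c := by
  induction w with
  | zero => simp
  | tmul r a =>
    rw [tmul_eq_smul_one_tmul, smul_prodX, cocycle_iff.mp hC, smul_actSigma, smul_actSigma,
      one_tmul_actSigma]
  | add s t hs ht => simp only [add_tmul, map_add, hs, ht]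

lemma prodX_rhat (hT : Twisted k P C ψ e ψC ρ σ) {z : P} (hz : z ∈ Msub k P C ψ e)
    (w : P ⊗[k] C) (b : C) :
    w ⋆ rhat k P C ψ ρ (b ⊗ₜ z) = (w ◀ b) ◁ z := by
  induction w with
  | zero => simp
  | tmul r a =>
    rw [tmul_eq_smul_one_tmul, smul_prodX, ← TwLHS_tmul, hT a b z hz, TwRHS_tmul,
      smul_actSigma, smul_actRho, one_tmul_actSigma]
  | add s t hs ht => simp only [add_tmul, map_add, hs, ht]

lemma prodX_actSigma (hIII : CondIII k P C ψ e ρ) (hσ : SigmaIntoM k P C ψ e σ)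
    (hC : Cocycle k P C ψ ψC ρ σ) {v : P ⊗[k] C} (hv : v ∈ MCsub k P C ψ e)
    (u : P ⊗[k] C) (c : C) :
    u ⋆ (v ◀ c) = (u ⋆ v) ◀ c := by
  refine MCsub_induction ?_ (fun s t hs ht => ?_) (fun y hy b => ?_) hv
  · simp
  · simp only [add_tmul, tmul_add, map_add, hs, ht]
  · rw [actSigma_tmul, prodX_smul hIII hy (shat_mem_MCsub hσ _), prodX_shat hC,
      prodX_tmul_tmul]

lemma prodX_actRho (hII : CondII k P C ψ e ρ) (hIII : CondIII k P C ψ e ρ)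
    (hT : Twisted k P C ψ e ψC ρ σ) {v : P ⊗[k] C} (hv : v ∈ MCsub k P C ψ e)
    {z : P} (hz : z ∈ Msub k P C ψ e) (u : P ⊗[k] C) :
    u ⋆ (v ◁ z) = (u ⋆ v) ◁ z := by
  refine MCsub_induction ?_ (fun s t hs ht => ?_) (fun y hy b => ?_) hv
  · simp
  · simp only [add_tmul, tmul_add, map_add, hs, ht]
  · rw [actRho_tmul, prodX_smul hIII hy (hII b z hz), prodX_rhat hT hz, prodX_tmul_tmul]

theorem prodX_assoc (hMul : AxMul k P C ψ) (hII : CondII k P C ψ e ρ)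
    (hIII : CondIII k P C ψ e ρ) (hσ : SigmaIntoM k P C ψ e σ)
    (hC : Cocycle k P C ψ ψC ρ σ) (hT : Twisted k P C ψ e ψC ρ σ) (u : P ⊗[k] C)
    {v w : P ⊗[k] C} (hv : v ∈ MCsub k P C ψ e) (hw : w ∈ MCsub k P C ψ e) :
    (u ⋆ v) ⋆ w = u ⋆ (v ⋆ w) := by
  refine MCsub_induction ?_ (fun s t hs ht => ?_) (fun z hz c => ?_) hw
  · simp
  · simp only [tmul_add, map_add, hs, ht]
  · rw [prodX_tmul_tmul, prodX_tmul_tmul, ← prodX_actRho hII hIII hT hv hz,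
      prodX_actSigma hIII hσ hC (actRho_mem hMul hII hv hz)]

lemma prodX_one_tmul (hOne : AxOne k P C ψ)
    (hρ : ∀ c : C, ρ (c ⊗ₜ (1 : P)) = ε k C c • (1 : P)) (u : P ⊗[k] C) (c : C) :
    u ⋆ ((1 : P) ⊗ₜ c) = u ◀ c := by
  rw [prodX_tmul_tmul, actRho_one hOne hρ]

lemma prodX_tmul_e (hσe : ∀ c : C, shat k P C ψC σ (c ⊗ₜ e) = (1 : P) ⊗ₜ c)
    (u : P ⊗[k] C) (x : P) : u ⋆ (x ⊗ₜ e) = u ◁ x := by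
  rw [prodX_tmul_tmul, actSigma_e hσe]

end CrossedProduct

/-- The crossed product on `M ⊗ C` is associative if and only if the
cocycle condition (2.6) and the twisted module condition (2.7) hold. -/
theorem crossed_product_assoc_iff
    (k : Type) [Field k] (P : Type) [Ring P] [Algebra k P]
    (C : Type) [AddCommGroup C] [Module k C] [Coalgebra k C]
    (ψ : C ⊗[k] P →ₗ[k] P ⊗[k] C) (e : C) (ψC : C ⊗[k] C →ₗ[k] C ⊗[k] C)
    (ρ : C ⊗[k] P →ₗ[k] P) (σ : C ⊗[k] C →ₗ[k] P)
    (hdata : IsEntwiningData k P C ψ e ψC)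
    (hcross : IsCrossedData k P C ψ e ψC ρ σ) :
    (∀ u ∈ MCsub k P C ψ e, ∀ v ∈ MCsub k P C ψ e, ∀ w ∈ MCsub k P C ψ e,
        prodX k P C ψ ψC ρ σ (prodX k P C ψ ψC ρ σ (u ⊗ₜ v) ⊗ₜ w) =
          prodX k P C ψ ψC ρ σ (u ⊗ₜ prodX k P C ψ ψC ρ σ (v ⊗ₜ w))) ↔
      Cocycle k P C ψ ψC ρ σ ∧ Twisted k P C ψ e ψC ρ σ := by
  obtain ⟨⟨hMul, hOne, -, -⟩, -, -, -, -⟩ := hdata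
  obtain ⟨⟨-, hρ⟩, hII, hIII, hσ, -, hσe⟩ := hcross
  have h1 : (1 : P) ∈ Msub k P C ψ e := hOne e
  refine ⟨fun hA => ⟨cocycle_iff.mpr fun a b c => ?_, fun a b x hx => ?_⟩,
    fun ⟨hC, hT⟩ u _ v hv w hw => prodX_assoc hMul hII hIII hσ hC hT u hv hw⟩
  · have h := hA _ (tmul_mem_MCsub h1 a) _ (tmul_mem_MCsub h1 b) _ (tmul_mem_MCsub h1 c)
    simp only [prodX_one_tmul hOne hρ, one_tmul_actSigma] at h
    exact h.symm
  · have h := hA _ (tmul_mem_MCsub h1 a) _ (tmul_mem_MCsub h1 b) _ (tmul_mem_MCsub hx e)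
    simp only [prodX_one_tmul hOne hρ, one_tmul_actSigma, prodX_tmul_e hσe,
      one_tmul_actRho] at h
    rw [TwLHS_tmul, TwRHS_tmul]
    exact h.symm

end Entwine
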